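/- In the additive Gaussian channel y = ρx + w, the ρ-derivative of the likelihood ratio satisfies (d/dρ)ℓ(u) = ℓ(u)·( ⟨E[x|y=u], u⟩ − ρ E[|x|² | y = u] ) for every u, where the conditional expectations are the posterior means given y = u. -/

import Mathlib

open MeasureTheory Real
open scoped RealInnerProductSpace ENNReal

noncomputable def stdGaussian (n : ℕ) : Measure (EuclideanSpace ℝ (Fin n)) :=
  volume.withDensity
    (fun w => ENNReal.ofReal ((2 * π) ^ (-(n : ℝ) / 2) * Real.exp (-‖w‖ ^ 2 / 2)))

noncomputable def lik (n : ℕ) (ρ : ℝ) (μX : Measure (EuclideanSpace ℝ (Fin n)))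
    (u : EuclideanSpace ℝ (Fin n)) : ℝ :=
  ∫ x, Real.exp (ρ * ⟪u, x⟫ - ρ ^ 2 / 2 * ‖x‖ ^ 2) ∂μX

noncomputable def postExp (n : ℕ) (ρ : ℝ) (μX : Measure (EuclideanSpace ℝ (Fin n)))
    (F : EuclideanSpace ℝ (Fin n) → ℝ) (u : EuclideanSpace ℝ (Fin n)) : ℝ :=
  (lik n ρ μX u)⁻¹ * ∫ x, Real.exp (ρ * ⟪u, x⟫ - ρ ^ 2 / 2 * ‖x‖ ^ 2) * F x ∂μX

noncomputable def postMean (n : ℕ) (ρ : ℝ) (μX : Measure (EuclideanSpace ℝ (Fin n)))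
    (u : EuclideanSpace ℝ (Fin n)) : EuclideanSpace ℝ (Fin n) :=
  (lik n ρ μX u)⁻¹ • ∫ x, Real.exp (ρ * ⟪u, x⟫ - ρ ^ 2 / 2 * ‖x‖ ^ 2) • x ∂μX

/-! The exponent of the likelihood integrand completes to a square,
`r⟪u, x⟫ - r²‖x‖²/2 = ‖u‖²/2 - ‖u - r • x‖²/2`, so the integrand is a Gaussian bump in
`u - r • x`. Since `r‖x‖ ≤ ‖u‖ + ‖u - r • x‖`, the integrand times `(1 + r‖x‖)²` stays bounded by
a constant depending only on `u`. Hence for `r` near `ρ > 0` the `r`-derivative of the integrand is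
uniformly bounded, which justifies differentiating under the integral sign, and the first two
posterior moments appearing in the formula are finite. -/

theorem Real.sq_mul_exp_neg_sq_div_two_le (s : ℝ) : s ^ 2 * exp (-s ^ 2 / 2) ≤ 2 := by
  have h := add_one_le_exp (s ^ 2 / 2)
  rw [neg_div, exp_neg, ← div_eq_mul_inv, div_le_iff₀ (exp_pos _)]
  linarith

theorem Real.add_sq_mul_exp_neg_sq_div_two_le (a s : ℝ) :
    (a + s) ^ 2 * exp (-s ^ 2 / 2) ≤ 2 * (a ^ 2 + 2) := by
  have hexp : exp (-s ^ 2 / 2) ≤ 1 := exp_le_one_iff.2 (by nlinarith [sq_nonneg s])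
  have hgauss := sq_mul_exp_neg_sq_div_two_le s
  have hsq : (a + s) ^ 2 ≤ 2 * a ^ 2 + 2 * s ^ 2 := by nlinarith [sq_nonneg (a - s)]
  nlinarith [exp_pos (-s ^ 2 / 2), sq_nonneg a]

section LikelihoodWeight

variable {E : Type*} [NormedAddCommGroup E] [InnerProductSpace ℝ E]

/-- The integrand of `lik`: `lik n r μX u = ∫ x, likWeight r u x ∂μX` holds by `rfl`. -/
noncomputable def likWeight (r : ℝ) (u x : E) : ℝ := exp (r * ⟪u, x⟫ - r ^ 2 / 2 * ‖x‖ ^ 2)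

theorem likWeight_pos (r : ℝ) (u x : E) : 0 < likWeight r u x := exp_pos _

theorem likWeight_eq (r : ℝ) (u x : E) :
    likWeight r u x = exp (‖u‖ ^ 2 / 2) * exp (-‖u - r • x‖ ^ 2 / 2) := by
  rw [likWeight, ← exp_add, norm_sub_sq_real, inner_smul_right, norm_smul, mul_pow,
    Real.norm_eq_abs, sq_abs]
  ring_nf

theorem likWeight_le (r : ℝ) (u x : E) : likWeight r u x ≤ exp (‖u‖ ^ 2 / 2) := by
  rw [likWeight_eq]
  exact mul_le_of_le_one_right (exp_pos _).le
    (exp_le_one_iff.2 (by nlinarith [sq_nonneg ‖u - r • x‖]))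

noncomputable def likWeightBound (u : E) : ℝ := 2 * ((1 + ‖u‖) ^ 2 + 2) * exp (‖u‖ ^ 2 / 2)

theorem one_add_mul_norm_sq_mul_likWeight_le {r : ℝ} (hr : 0 ≤ r) (u x : E) :
    (1 + r * ‖x‖) ^ 2 * likWeight r u x ≤ likWeightBound u := by
  have htri : r * ‖x‖ ≤ ‖u‖ + ‖u - r • x‖ := by
    calc r * ‖x‖ = ‖u - (u - r • x)‖ := by rw [sub_sub_cancel, norm_smul, Real.norm_of_nonneg hr]
      _ ≤ ‖u‖ + ‖u - r • x‖ := norm_sub_le _ _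
  calc (1 + r * ‖x‖) ^ 2 * likWeight r u x
      ≤ (1 + ‖u‖ + ‖u - r • x‖) ^ 2 * exp (-‖u - r • x‖ ^ 2 / 2) * exp (‖u‖ ^ 2 / 2) := by
        rw [likWeight_eq, mul_comm (exp _) (exp _), ← mul_assoc]
        gcongr ?_ ^ 2 * _ * _
        linarith
    _ ≤ likWeightBound u :=
        mul_le_mul_of_nonneg_right (add_sq_mul_exp_neg_sq_div_two_le _ _) (exp_pos _).le

theorem mul_norm_mul_likWeight_le {r : ℝ} (hr : 0 ≤ r) (u x : E) :
    r * ‖x‖ * likWeight r u x ≤ likWeightBound u := by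
  refine le_trans ?_ (one_add_mul_norm_sq_mul_likWeight_le hr u x)
  gcongr
  · exact (exp_pos _).le
  · nlinarith [sq_nonneg (r * ‖x‖)]

theorem mul_norm_sq_mul_likWeight_le {r : ℝ} (hr : 0 ≤ r) (u x : E) :
    (r * ‖x‖) ^ 2 * likWeight r u x ≤ likWeightBound u := by
  refine le_trans ?_ (one_add_mul_norm_sq_mul_likWeight_le hr u x)
  gcongr
  · exact (exp_pos _).le
  · have : 0 ≤ r * ‖x‖ := by positivity
    linarith

theorem abs_inner_sub_mul_norm_sq_mul_likWeight_le {r : ℝ} (hr : 0 < r) (u x : E) :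
    |(⟪u, x⟫ - r * ‖x‖ ^ 2) * likWeight r u x| ≤ (‖u‖ + 1) * likWeightBound u / r := by
  have hw := likWeight_pos r u x
  have hinner : |⟪u, x⟫ - r * ‖x‖ ^ 2| ≤ ‖u‖ * ‖x‖ + r * ‖x‖ ^ 2 := by
    refine (abs_sub _ _).trans ?_
    rw [abs_of_nonneg (by positivity : 0 ≤ r * ‖x‖ ^ 2)]
    gcongr
    exact abs_real_inner_le_norm u x
  rw [le_div_iff₀ hr, abs_mul, abs_of_pos hw]
  calc |⟪u, x⟫ - r * ‖x‖ ^ 2| * likWeight r u x * r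
      ≤ ‖u‖ * (r * ‖x‖ * likWeight r u x) + (r * ‖x‖) ^ 2 * likWeight r u x := by
        nlinarith [mul_le_mul_of_nonneg_right hinner (mul_pos hw hr).le]
    _ ≤ (‖u‖ + 1) * likWeightBound u := by
        nlinarith [mul_norm_mul_likWeight_le hr.le u x, mul_norm_sq_mul_likWeight_le hr.le u x,
          norm_nonneg u]

theorem hasDerivAt_likWeight (r : ℝ) (u x : E) :
    HasDerivAt (fun r ↦ likWeight r u x) ((⟪u, x⟫ - r * ‖x‖ ^ 2) * likWeight r u x) r := by
  have hexponent : HasDerivAt (fun r ↦ r * ⟪u, x⟫ - r ^ 2 / 2 * ‖x‖ ^ 2)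
      (⟪u, x⟫ - r * ‖x‖ ^ 2) r :=
    (((hasDerivAt_id r).mul_const ⟪u, x⟫).sub
      (((hasDerivAt_pow 2 r).div_const 2).mul_const (‖x‖ ^ 2))).congr_deriv (by push_cast; ring)
  rw [mul_comm]
  exact hexponent.exp

@[fun_prop]
theorem continuous_likWeight (r : ℝ) (u : E) : Continuous (likWeight r u) := by
  unfold likWeight
  fun_prop

section Integral

variable [MeasurableSpace E] [OpensMeasurableSpace E] (μ : Measure E) [IsFiniteMeasure μ]

theorem integrable_likWeight (r : ℝ) (u : E) : Integrable (likWeight r u) μ :=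
  .of_bound (by fun_prop) _ (ae_of_all _ fun x ↦ by
    rw [Real.norm_of_nonneg (likWeight_pos r u x).le]
    exact likWeight_le r u x)

theorem integrable_likWeight_mul_norm_sq {r : ℝ} (hr : 0 < r) (u : E) :
    Integrable (fun x ↦ likWeight r u x * ‖x‖ ^ 2) μ :=
  .of_bound (by fun_prop) (likWeightBound u / r ^ 2) (ae_of_all _ fun x ↦ by
    rw [Real.norm_of_nonneg (mul_nonneg (likWeight_pos r u x).le (by positivity)),
      le_div_iff₀ (by positivity)]
    linarith [mul_norm_sq_mul_likWeight_le hr.le u x])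

theorem integrable_likWeight_smul [SecondCountableTopology E] {r : ℝ} (hr : 0 < r) (u : E) :
    Integrable (fun x ↦ likWeight r u x • x) μ :=
  .of_bound (by fun_prop) (likWeightBound u / r) (ae_of_all _ fun x ↦ by
    rw [norm_smul, Real.norm_of_nonneg (likWeight_pos r u x).le, le_div_iff₀ hr]
    linarith [mul_norm_mul_likWeight_le hr.le u x])

theorem hasDerivAt_integral_likWeight {ρ : ℝ} (hρ : 0 < ρ) (u : E) :
    HasDerivAt (fun r ↦ ∫ x, likWeight r u x ∂μ)
      (∫ x, (⟪u, x⟫ - ρ * ‖x‖ ^ 2) * likWeight ρ u x ∂μ) ρ := by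
  refine (hasDerivAt_integral_of_dominated_loc_of_deriv_le
    (bound := fun _ ↦ (‖u‖ + 1) * likWeightBound u / (ρ / 2))
    (Metric.ball_mem_nhds ρ (half_pos hρ)) (.of_forall fun r ↦ by fun_prop)
    (integrable_likWeight μ ρ u) (by fun_prop) (ae_of_all _ fun x r hr ↦ ?_)
    (integrable_const _) (ae_of_all _ fun x r _ ↦ hasDerivAt_likWeight r u x)).2
  have hr' : ρ / 2 < r := by
    rw [Metric.mem_ball, Real.dist_eq, abs_lt] at hr
    linarith
  have hr0 : 0 < r := (half_pos hρ).trans hr'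
  rw [Real.norm_eq_abs]
  refine (abs_inner_sub_mul_norm_sq_mul_likWeight_le hr0 u x).trans ?_
  have hC : 0 ≤ (‖u‖ + 1) * likWeightBound u := by unfold likWeightBound; positivity
  exact div_le_div_of_nonneg_left hC (half_pos hρ) hr'.le

theorem integral_likWeight_pos [NeZero μ] (r : ℝ) (u : E) : 0 < ∫ x, likWeight r u x ∂μ :=
  integral_exp_pos (integrable_likWeight μ r u)

theorem integral_inner_sub_mul_norm_sq_mul_likWeight [CompleteSpace E] [SecondCountableTopology E]
    {ρ : ℝ} (hρ : 0 < ρ) (u : E) :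
    ∫ x, (⟪u, x⟫ - ρ * ‖x‖ ^ 2) * likWeight ρ u x ∂μ =
      ⟪u, ∫ x, likWeight ρ u x • x ∂μ⟫ - ρ * ∫ x, likWeight ρ u x * ‖x‖ ^ 2 ∂μ := by
  have hsmul := integrable_likWeight_smul μ hρ u
  rw [← integral_inner hsmul, ← integral_const_mul,
    ← integral_sub (hsmul.const_inner u) ((integrable_likWeight_mul_norm_sq μ hρ u).const_mul ρ)]
  congr with x
  rw [real_inner_smul_right]
  ring

end Integral

end LikelihoodWeight

section Channel

variable {n : ℕ} (μX : Measure (EuclideanSpace ℝ (Fin n))) [IsProbabilityMeasure μX]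
  (ρ : ℝ) (u : EuclideanSpace ℝ (Fin n))

theorem lik_pos : 0 < lik n ρ μX u := integral_likWeight_pos μX ρ u

theorem lik_mul_inner_postMean :
    lik n ρ μX u * ⟪postMean n ρ μX u, u⟫ = ⟪u, ∫ x, likWeight ρ u x • x ∂μX⟫ := by
  rw [postMean, real_inner_smul_left, mul_inv_cancel_left₀ (lik_pos μX ρ u).ne', real_inner_comm]
  rfl

theorem lik_mul_postExp (F : EuclideanSpace ℝ (Fin n) → ℝ) :
    lik n ρ μX u * postExp n ρ μX F u = ∫ x, likWeight ρ u x * F x ∂μX :=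
  mul_inv_cancel_left₀ (lik_pos μX ρ u).ne' _

end Channel

theorem deriv_likelihood_in_rho_general (n : ℕ) (ρ : ℝ) (hρ : 0 < ρ)
    (μX : Measure (EuclideanSpace ℝ (Fin n))) [IsProbabilityMeasure μX]
    (u : EuclideanSpace ℝ (Fin n)) :
    HasDerivAt (fun r => lik n r μX u)
      (lik n ρ μX u * (⟪postMean n ρ μX u, u⟫
        - ρ * postExp n ρ μX (fun x => ‖x‖ ^ 2) u)) ρ := by
  refine (hasDerivAt_integral_likWeight μX hρ u).congr_deriv ?_
  rw [integral_inner_sub_mul_norm_sq_mul_likWeight μX hρ u, mul_sub, lik_mul_inner_postMean,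
    mul_left_comm, lik_mul_postExp]

/-- (d/dρ) ℓ(u) = ℓ(u) (⟨E[x|y=u], u⟩ − ρ E[|x|² | y=u]). -/
theorem deriv_likelihood_in_rho (n : ℕ) (ρ : ℝ) (hρ : 0 < ρ)
    (μX : Measure (EuclideanSpace ℝ (Fin n))) [IsProbabilityMeasure μX]
    (hexp : ∀ (α : ℝ) (h : EuclideanSpace ℝ (Fin n)),
      Integrable (fun x => Real.exp (α * ⟪x, h⟫)) μX)
    (u : EuclideanSpace ℝ (Fin n)) :
    HasDerivAt (fun r => lik n r μX u)
      (lik n ρ μX u * (⟪postMean n ρ μX u, u⟫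
        - ρ * postExp n ρ μX (fun x => ‖x‖ ^ 2) u)) ρ :=
  deriv_likelihood_in_rho_general n ρ hρ μX u
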